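/- If x_1, ..., x_k are real-valued random variables with E[x_i] = 0 and E[x_i^2] = σ_i^2 for each i, then Pr[max_i x_i ≥ 1] ≤ Σ_{i=1}^k σ_i^2 / (1 + σ_i^2). -/

import Mathlib

/-!
Each event `{1 ≤ X i}` is controlled by Cantelli's inequality: for every shift `c` with
`t + c > 0`, Markov's inequality applied to `(X + c) ^ 2` gives
`P(t ≤ X) ≤ (E[X²] + c²) / (t + c)²`, and the choice `c = E[X²] / t` turns this into
`E[X²] / (E[X²] + t²)`. A union bound over `i` finishes the proof.
-/

open MeasureTheory Finset

namespace ProbabilityTheory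

variable {Ω : Type*} [MeasurableSpace Ω] {μ : Measure Ω} {X : Ω → ℝ}

lemma integrable_add_const_sq [IsFiniteMeasure μ] (hX : Integrable X μ)
    (hX2 : Integrable (fun ω => X ω ^ 2) μ) (c : ℝ) : Integrable (fun ω => (X ω + c) ^ 2) μ :=
  ((hX2.add (hX.const_mul (2 * c))).add (integrable_const (c ^ 2))).congr
    (ae_of_all _ fun ω => by simp only [Pi.add_apply]; ring)

lemma integral_add_const_sq [IsProbabilityMeasure μ] (hX : Integrable X μ)
    (hX2 : Integrable (fun ω => X ω ^ 2) μ) (hmean : ∫ ω, X ω ∂μ = 0) (c : ℝ) :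
    ∫ ω, (X ω + c) ^ 2 ∂μ = ∫ ω, X ω ^ 2 ∂μ + c ^ 2 := by
  have hexpand : (fun ω => (X ω + c) ^ 2) = fun ω => X ω ^ 2 + 2 * c * X ω + c ^ 2 := by
    funext ω; ring
  rw [hexpand, integral_add (f := fun ω => X ω ^ 2 + 2 * c * X ω)
    (hX2.add (hX.const_mul _)) (integrable_const _),
    integral_add (f := fun ω => X ω ^ 2) hX2 (hX.const_mul _), integral_const_mul, hmean]
  simp

lemma measureReal_ge_le_integral_add_sq_div [IsProbabilityMeasure μ] (hX : Integrable X μ)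
    (hX2 : Integrable (fun ω => X ω ^ 2) μ) (hmean : ∫ ω, X ω ∂μ = 0) {t c : ℝ}
    (htc : 0 < t + c) :
    μ.real {ω | t ≤ X ω} ≤ (∫ ω, X ω ^ 2 ∂μ + c ^ 2) / (t + c) ^ 2 := by
  have hsub : {ω | t ≤ X ω} ⊆ {ω | (t + c) ^ 2 ≤ (X ω + c) ^ 2} := fun ω (hω : t ≤ X ω) =>
    pow_le_pow_left₀ htc.le (by linarith) 2
  have hmarkov := mul_meas_ge_le_integral_of_nonneg (ae_of_all _ fun ω => sq_nonneg (X ω + c))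
    (integrable_add_const_sq hX hX2 c) ((t + c) ^ 2)
  rw [integral_add_const_sq hX hX2 hmean] at hmarkov
  rw [le_div_iff₀ (by positivity), mul_comm]
  exact (mul_le_mul_of_nonneg_left (measureReal_mono hsub) (by positivity)).trans hmarkov

theorem measure_ge_le_div_add_sq [IsProbabilityMeasure μ] (hX : Integrable X μ)
    (hX2 : Integrable (fun ω => X ω ^ 2) μ) (hmean : ∫ ω, X ω ∂μ = 0) {t : ℝ} (ht : 0 < t) :
    μ {ω | t ≤ X ω} ≤
      ENNReal.ofReal ((∫ ω, X ω ^ 2 ∂μ) / ((∫ ω, X ω ^ 2 ∂μ) + t ^ 2)) := by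
  set v := ∫ ω, X ω ^ 2 ∂μ
  have hv : 0 ≤ v := integral_nonneg fun ω => sq_nonneg (X ω)
  have hbound := measureReal_ge_le_integral_add_sq_div hX hX2 hmean
    (t := t) (c := v / t) (by positivity)
  have hoptimal : (v + (v / t) ^ 2) / (t + v / t) ^ 2 = v / (v + t ^ 2) := by
    field_simp
    ring
  rw [← ofReal_measureReal]
  exact ENNReal.ofReal_le_ofReal (hoptimal ▸ hbound)

end ProbabilityTheory

theorem marshall_olkin_one_sided_general
    {Ω : Type*} [MeasurableSpace Ω] (μ : Measure Ω) [IsProbabilityMeasure μ]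
    (k : ℕ) (X : Fin k → Ω → ℝ) (σ : Fin k → ℝ)
    (hint : ∀ i, Integrable (X i) μ)
    (hint2 : ∀ i, Integrable (fun ω => (X i ω) ^ 2) μ)
    (hmean : ∀ i, ∫ ω, X i ω ∂μ = 0)
    (hvar : ∀ i, ∫ ω, (X i ω) ^ 2 ∂μ = (σ i) ^ 2) :
    μ {ω | ∃ i, 1 ≤ X i ω} ≤ ENNReal.ofReal (∑ i, (σ i) ^ 2 / (1 + (σ i) ^ 2)) := by
  have hcantelli (i : Fin k) :
      μ {ω | 1 ≤ X i ω} ≤ ENNReal.ofReal ((σ i) ^ 2 / (1 + (σ i) ^ 2)) := by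
    simpa [hvar i, add_comm] using
      ProbabilityTheory.measure_ge_le_div_add_sq (hint i) (hint2 i) (hmean i) one_pos
  calc μ {ω | ∃ i, 1 ≤ X i ω} = μ (⋃ i, {ω | 1 ≤ X i ω}) := by rw [Set.ofPred_exists]
    _ ≤ ∑ i, μ {ω | 1 ≤ X i ω} := measure_iUnion_fintype_le μ _
    _ ≤ ∑ i, ENNReal.ofReal ((σ i) ^ 2 / (1 + (σ i) ^ 2)) := sum_le_sum fun i _ => hcantelli i
    _ = ENNReal.ofReal (∑ i, (σ i) ^ 2 / (1 + (σ i) ^ 2)) :=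
      (ENNReal.ofReal_sum_of_nonneg fun i _ => by positivity).symm

theorem marshall_olkin_one_sided
    {Ω : Type*} [MeasurableSpace Ω] (μ : Measure Ω) [IsProbabilityMeasure μ]
    (k : ℕ) (X : Fin k → Ω → ℝ) (σ : Fin k → ℝ)
    (hmeas : ∀ i, Measurable (X i))
    (hint : ∀ i, Integrable (X i) μ)
    (hint2 : ∀ i, Integrable (fun ω => (X i ω) ^ 2) μ)
    (hmean : ∀ i, ∫ ω, X i ω ∂μ = 0)
    (hvar : ∀ i, ∫ ω, (X i ω) ^ 2 ∂μ = (σ i) ^ 2) :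
    μ {ω | ∃ i, 1 ≤ X i ω} ≤ ENNReal.ofReal (∑ i, (σ i) ^ 2 / (1 + (σ i) ^ 2)) :=
  marshall_olkin_one_sided_general μ k X σ hint hint2 hmean hvar
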